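/- Let d > 0 and f ∈ ℛ_d with f ≠ 0. Then: (a) M_f is a K-linear subspace of Mat_r(K) containing the identity matrix; (b) γ_f : M_f → ℛ_d is K-linear; (c) dim_K ker γ_f = r·β_{11}(f) and dim_K im γ_f = 1 + β_{1d}(f); (d) dim_K M_f = 1 + β_{1d}(f) + r·β_{11}(f). -/

import Mathlib

/-!
Over a field of characteristic zero the apolarity pairing `⟨D, g⟩ = D(g)` between forms of equal
degree is perfect, and a form of positive degree is determined by its first partials (Euler).

For `A ∈ M_f` the polynomial 1-form `Σᵢ (A∂)ᵢ f dxᵢ` is closed, so it is the differential of the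
unique form `γ_f(A) = d⁻¹ Σᵢ xᵢ (A∂)ᵢ f`; uniqueness makes `γ_f` linear, with kernel the matrices
whose rows lie in `ann_R(f)₁`, i.e. `(ann_R(f)₁)^r`. A form `g` of degree `d` is in the image iff
every `∂ᵢ g` lies in `R₁ f = span {∂ₖ f}`. The orthogonal of `R₁ f` in degree `d - 1` is
`ann_R(f)_{d-1}`, so by biduality this says that `g` is orthogonal to `R₁ · ann_R(f)_{d-1}`, and
`dim im γ_f = dim ℛ_d - dim R₁ · ann_R(f)_{d-1}`. Since `ann_R(f)_d` is the orthogonal of `f`, it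
has dimension `dim ℛ_d - 1`; rank–nullity then gives `dim M_f`.
-/

open MvPolynomial

namespace Kleppe

noncomputable section

open scoped Classical

variable {K : Type*}

/-- The iterated partial-derivative operator `∂^β` applied to `f`
(in the standard polynomial ring; char 0 identification of divided powers). -/
def derivMulti [CommSemiring K] {r : ℕ} (β : Fin r →₀ ℕ) (f : MvPolynomial (Fin r) K) :
    MvPolynomial (Fin r) K :=
  ∑ α ∈ f.support,
    if β ≤ α then
      MvPolynomial.monomial (α - β)
        ((∏ i : Fin r, (α i).descFactorial (β i)) • MvPolynomial.coeff α f)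
    else 0

/-- The apolarity action `D(f)` of a differential operator `D ∈ R = K[∂_1,…,∂_r]`
on a polynomial `f ∈ ℛ = K[x_1,…,x_r]`; `∂_i` acts as `∂/∂x_i`. -/
def contract [CommSemiring K] {r : ℕ} (D f : MvPolynomial (Fin r) K) :
    MvPolynomial (Fin r) K :=
  ∑ β ∈ D.support, MvPolynomial.coeff β D • derivMulti β f

/-- `(A∂)_i = Σ_k A_{ik} ∂_k`, as an element of `R`. -/
def rowOp [CommSemiring K] {r : ℕ} (A : Matrix (Fin r) (Fin r) K) (i : Fin r) :
    MvPolynomial (Fin r) K :=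
  ∑ k : Fin r, A i k • X k

/-- The matrix space `M_f = {A | ∂_i·(A∂)_j − ∂_j·(A∂)_i ∈ ann_R f for all i,j}`. -/
def Mf [CommRing K] {r : ℕ} (f : MvPolynomial (Fin r) K) :
    Set (Matrix (Fin r) (Fin r) K) :=
  {A | ∀ i j : Fin r, contract (X i * rowOp A j - X j * rowOp A i) f = 0}

/-- `γ_f(A)`: the unique homogeneous `g` of degree `d` with `∂_i g = (A∂)_i (f)` for all `i`
(defined by choice; junk value `0` if no such `g` exists). -/
def gammaf [CommRing K] {r : ℕ} (d : ℕ) (f : MvPolynomial (Fin r) K)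
    (A : Matrix (Fin r) (Fin r) K) : MvPolynomial (Fin r) K :=
  if h : ∃ g : MvPolynomial (Fin r) K, g.IsHomogeneous d ∧
      ∀ i, contract (X i) g = contract (rowOp A i) f then h.choose else 0

/-- `R_e(g)`, the space of contractions of `g` by homogeneous operators of degree `e`. -/
def partials [CommRing K] {r : ℕ} (e : ℕ) (g : MvPolynomial (Fin r) K) :
    Submodule K (MvPolynomial (Fin r) K) :=
  Submodule.span K {p | ∃ D : MvPolynomial (Fin r) K, D.IsHomogeneous e ∧ p = contract D g}

/-- `G` is (the set of components of) a regular splitting of `f`: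
`f = Σ_{g ∈ G} g`, each `g` a nonzero degree-`d` form, and the spaces of
`(d−1)`-st partials `R_{d−1}(g)` are independent. -/
def IsRegSplit [CommRing K] {r : ℕ} (d : ℕ) (f : MvPolynomial (Fin r) K)
    (G : Set (MvPolynomial (Fin r) K)) : Prop :=
  G.Finite ∧ G.Nonempty ∧ (∀ g ∈ G, g ≠ 0 ∧ g.IsHomogeneous d) ∧ (∑ᶠ g ∈ G, g) = f ∧
  ∀ g ∈ G, Disjoint (partials (d - 1) g) (⨆ h ∈ G \ {g}, partials (d - 1) h)

/-- A complete set of orthogonal idempotents in `M_f`. -/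
def IsCoid [CommRing K] {r : ℕ} (f : MvPolynomial (Fin r) K)
    (E : Set (Matrix (Fin r) (Fin r) K)) : Prop :=
  E.Finite ∧ E ⊆ Mf f ∧ (∀ A ∈ E, A ≠ 0) ∧
  (∀ A ∈ E, ∀ B ∈ E, A ≠ B → A * B = 0) ∧ (∑ᶠ A ∈ E, A) = 1

end

end Kleppe

theorem Submodule.setFinrank_coe {R M : Type*} [Semiring R] [AddCommMonoid M] [Module R M]
    (p : Submodule R M) : Set.finrank R (p : Set M) = Module.finrank R p := by
  rw [Set.finrank, span_eq]

namespace MvPolynomial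

variable {σ K : Type*}

section CommSemiring

variable [CommSemiring K]

theorem IsHomogeneous.eq_C_coeff_zero {p : MvPolynomial σ K} (hp : p.IsHomogeneous 0) :
    p = C (coeff 0 p) :=
  totalDegree_eq_zero_iff_eq_C.mp (Nat.le_zero.mp hp.totalDegree_le)

variable [Fintype σ]

theorem IsHomogeneous.exists_sum_smul_X_eq {p : MvPolynomial σ K} (hp : p.IsHomogeneous 1) :
    ∃ a : σ → K, ∑ k, a k • X k = p := by
  rw [← mem_homogeneousSubmodule, homogeneousSubmodule_one_eq_span_X] at hp
  exact (Submodule.mem_span_range_iff_exists_fun K).mp hp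

/-- Poincaré lemma for homogeneous polynomial 1-forms, with the primitive given by Euler's
identity. -/
theorem pderiv_sum_X_mul {n : ℕ} {h : σ → MvPolynomial σ K} (hh : ∀ i, (h i).IsHomogeneous n)
    (closed : ∀ i j, pderiv i (h j) = pderiv j (h i)) (j : σ) :
    pderiv j (∑ i, X i * h i) = (n + 1) • h j := by
  classical
  simp only [map_sum, Derivation.leibniz, pderiv_X, smul_eq_mul, Pi.single_apply, mul_ite,
    mul_one, mul_zero, Finset.sum_add_distrib, Finset.sum_ite_eq', Finset.mem_univ, if_true]
  rw [Finset.sum_congr rfl fun i _ => by rw [closed j i], (hh j).sum_X_mul_pderiv, add_smul,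
    one_smul, add_comm]

end CommSemiring

theorem IsHomogeneous.eq_of_forall_pderiv_eq [Field K] [CharZero K] [Fintype σ] {n : ℕ}
    (hn : n ≠ 0) {g h : MvPolynomial σ K} (hg : g.IsHomogeneous n) (hh : h.IsHomogeneous n)
    (hgh : ∀ i, pderiv i g = pderiv i h) : g = h := by
  have euler : n • g = n • h := by
    rw [← hg.sum_X_mul_pderiv, ← hh.sum_X_mul_pderiv]
    simp only [hgh]
  rw [← Nat.cast_smul_eq_nsmul K, ← Nat.cast_smul_eq_nsmul K] at euler
  exact smul_right_injective _ (Nat.cast_ne_zero.mpr hn) euler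

end MvPolynomial

namespace Kleppe

open Module

section

variable {K : Type*} {r : ℕ}

section CommSemiring

variable [CommSemiring K]

theorem coeff_derivMulti (β δ : Fin r →₀ ℕ) (f : MvPolynomial (Fin r) K) :
    coeff δ (derivMulti β f) = (∏ i, (δ i + β i).descFactorial (β i)) • coeff (δ + β) f := by
  classical
  rw [derivMulti, coeff_sum, Finset.sum_eq_single (δ + β)]
  · rw [if_pos le_add_self, add_tsub_cancel_right, coeff_monomial, if_pos rfl]
    simp only [Finsupp.add_apply]
  · intro α _ hα
    split_ifs with hle
    · rw [coeff_monomial, if_neg]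
      rintro rfl
      exact hα (tsub_add_cancel_of_le hle).symm
    · rfl
  · intro h
    rw [notMem_support_iff.mp h]
    simp

theorem coeff_contract_of_support_subset {D : MvPolynomial (Fin r) K}
    {S : Finset (Fin r →₀ ℕ)} (hS : D.support ⊆ S) (f : MvPolynomial (Fin r) K)
    (δ : Fin r →₀ ℕ) :
    coeff δ (contract D f) =
      ∑ β ∈ S, coeff β D * ((∏ i, (δ i + β i).descFactorial (β i)) • coeff (δ + β) f) := by
  rw [contract, coeff_sum]
  refine Finset.sum_subset_zero_on_sdiff hS (fun β hβ => ?_) fun β _ => ?_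
  · rw [notMem_support_iff.mp (Finset.mem_sdiff.mp hβ).2, zero_mul]
  · rw [coeff_smul, coeff_derivMulti, smul_eq_mul]

theorem contract_add_left (D E f : MvPolynomial (Fin r) K) :
    contract (D + E) f = contract D f + contract E f := by
  classical
  ext δ
  rw [coeff_add,
    coeff_contract_of_support_subset (S := D.support ∪ E.support) support_add,
    coeff_contract_of_support_subset (S := D.support ∪ E.support) Finset.subset_union_left,
    coeff_contract_of_support_subset (S := D.support ∪ E.support) Finset.subset_union_right,
    ← Finset.sum_add_distrib]
  simp only [coeff_add, add_mul]

theorem contract_smul_left (c : K) (D f : MvPolynomial (Fin r) K) :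
    contract (c • D) f = c • contract D f := by
  ext δ
  rw [coeff_smul, coeff_contract_of_support_subset support_smul,
    coeff_contract_of_support_subset subset_rfl, Finset.smul_sum]
  simp only [coeff_smul, smul_eq_mul, mul_assoc]

theorem contract_add_right (D f g : MvPolynomial (Fin r) K) :
    contract D (f + g) = contract D f + contract D g := by
  ext δ
  simp only [coeff_add, coeff_contract_of_support_subset subset_rfl, smul_add, mul_add,
    Finset.sum_add_distrib]

theorem contract_smul_right (c : K) (D f : MvPolynomial (Fin r) K) :
    contract D (c • f) = c • contract D f := by
  ext δ
  simp only [coeff_smul, coeff_contract_of_support_subset subset_rfl, Finset.mul_sum,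
    smul_eq_mul, nsmul_eq_mul]
  exact Finset.sum_congr rfl fun _ _ => by ring

noncomputable def contractBilin :
    MvPolynomial (Fin r) K →ₗ[K] MvPolynomial (Fin r) K →ₗ[K] MvPolynomial (Fin r) K :=
  LinearMap.mk₂ K contract contract_add_left contract_smul_left contract_add_right
    contract_smul_right

@[simp]
theorem contractBilin_apply (D f : MvPolynomial (Fin r) K) : contractBilin D f = contract D f :=
  rfl

@[simp]
theorem contract_zero_left (f : MvPolynomial (Fin r) K) : contract 0 f = 0 :=
  contractBilin.map_zero₂ f

@[simp]
theorem contract_zero_right (D : MvPolynomial (Fin r) K) : contract D 0 = 0 :=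
  (contractBilin D).map_zero

theorem contract_sum_left {ι : Type*} (s : Finset ι) (D : ι → MvPolynomial (Fin r) K)
    (f : MvPolynomial (Fin r) K) : contract (∑ i ∈ s, D i) f = ∑ i ∈ s, contract (D i) f :=
  contractBilin.map_sum₂ s D f

theorem derivMulti_smul (β : Fin r →₀ ℕ) (c : K) (f : MvPolynomial (Fin r) K) :
    derivMulti β (c • f) = c • derivMulti β f := by
  ext δ
  simp only [coeff_derivMulti, coeff_smul, smul_eq_mul, nsmul_eq_mul]
  ring

theorem derivMulti_derivMulti (β γ : Fin r →₀ ℕ) (f : MvPolynomial (Fin r) K) :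
    derivMulti β (derivMulti γ f) = derivMulti (β + γ) f := by
  ext δ
  rw [coeff_derivMulti, coeff_derivMulti, coeff_derivMulti, smul_smul, ← add_assoc,
    ← Finset.prod_mul_distrib]
  congr 1
  refine Finset.prod_congr rfl fun i _ => ?_
  have h := Nat.descFactorial_mul_descFactorial (n := δ i + β i + γ i)
    (Nat.le_add_left (γ i) (β i))
  simp only [Finsupp.add_apply, ← add_assoc, Nat.add_sub_cancel] at h ⊢
  rw [← h, mul_comm]

theorem contract_monomial (β : Fin r →₀ ℕ) (b : K) (f : MvPolynomial (Fin r) K) :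
    contract (monomial β b) f = b • derivMulti β f := by
  classical
  by_cases hb : b = 0
  · simp [hb]
  · rw [contract, support_monomial, if_neg hb, Finset.sum_singleton, coeff_monomial, if_pos rfl]

theorem contract_mul (D E f : MvPolynomial (Fin r) K) :
    contract (D * E) f = contract D (contract E f) := by
  induction D using MvPolynomial.induction_on' with
  | add D D' hD hD' => rw [add_mul, contract_add_left, contract_add_left, hD, hD']
  | monomial β b =>
    induction E using MvPolynomial.induction_on' with
    | add E E' hE hE' =>
      rw [mul_add, contract_add_left, hE, hE', contract_add_left E E' f, contract_add_right]
    | monomial γ c =>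
      rw [monomial_mul, contract_monomial, contract_monomial, contract_monomial,
        derivMulti_smul, smul_smul, derivMulti_derivMulti]

theorem contract_comm (D E f : MvPolynomial (Fin r) K) :
    contract D (contract E f) = contract E (contract D f) := by
  rw [← contract_mul, mul_comm, contract_mul]

theorem contract_X (i : Fin r) (f : MvPolynomial (Fin r) K) : contract (X i) f = pderiv i f := by
  classical
  ext δ
  rw [X, contract_monomial, one_smul, coeff_derivMulti, coeff_pderiv, Finset.prod_eq_single i]
  · simp [mul_comm]
  · intro j _ hj
    simp [Ne.symm hj]
  · simp

theorem isHomogeneous_contract {D f : MvPolynomial (Fin r) K} {d e : ℕ}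
    (hD : D.IsHomogeneous e) (hf : f.IsHomogeneous d) :
    (contract D f).IsHomogeneous (d - e) := by
  rw [← mem_homogeneousSubmodule, contract]
  refine Submodule.sum_mem _ fun β hβ => Submodule.smul_mem _ _ fun δ hδ => ?_
  rw [coeff_derivMulti] at hδ
  have hf' := hf (right_ne_zero_of_smul hδ)
  have hβ' := hD (mem_support_iff.mp hβ)
  rw [map_add] at hf'
  omega

theorem coeff_zero_contract_comm (D f : MvPolynomial (Fin r) K) :
    coeff 0 (contract D f) = coeff 0 (contract f D) := by
  classical
  rw [coeff_contract_of_support_subset (S := D.support ∪ f.support) Finset.subset_union_left,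
    coeff_contract_of_support_subset (S := D.support ∪ f.support) Finset.subset_union_right]
  refine Finset.sum_congr rfl fun β _ => ?_
  simp only [zero_add, Finsupp.coe_zero, Pi.zero_apply, nsmul_eq_mul]
  ring

theorem contract_eq_zero_iff_coeff_zero {n : ℕ} {D g : MvPolynomial (Fin r) K}
    (hD : D.IsHomogeneous n) (hg : g.IsHomogeneous n) :
    contract D g = 0 ↔ coeff 0 (contract D g) = 0 := by
  refine ⟨fun h => by rw [h, coeff_zero], fun h => ?_⟩
  have h0 : (contract D g).IsHomogeneous 0 := by
    simpa using isHomogeneous_contract hD hg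
  rw [h0.eq_C_coeff_zero, h, map_zero]

theorem contract_eq_zero_comm {n : ℕ} {D g : MvPolynomial (Fin r) K}
    (hD : D.IsHomogeneous n) (hg : g.IsHomogeneous n) :
    contract D g = 0 ↔ contract g D = 0 := by
  rw [contract_eq_zero_iff_coeff_zero hD hg, contract_eq_zero_iff_coeff_zero hg hD,
    coeff_zero_contract_comm]

theorem forall_mem_span_contract_eq_zero_iff {s : Set (MvPolynomial (Fin r) K)}
    {g : MvPolynomial (Fin r) K} :
    (∀ p ∈ Submodule.span K s, contract p g = 0) ↔ ∀ p ∈ s, contract p g = 0 :=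
  Submodule.span_le (p := LinearMap.ker (contractBilin.flip g))

theorem span_contract_X_le {d : ℕ} {f : MvPolynomial (Fin r) K} (hf : f.IsHomogeneous d) :
    Submodule.span K (Set.range fun k => contract (X k) f) ≤
      homogeneousSubmodule (Fin r) K (d - 1) :=
  Submodule.span_le.mpr <| Set.range_subset_iff.mpr fun k =>
    isHomogeneous_contract (isHomogeneous_X K k) hf

@[simp]
theorem rowOp_add (A B : Matrix (Fin r) (Fin r) K) (i : Fin r) :
    rowOp (A + B) i = rowOp A i + rowOp B i := by
  simp [rowOp, add_smul, Finset.sum_add_distrib]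

@[simp]
theorem rowOp_smul (c : K) (A : Matrix (Fin r) (Fin r) K) (i : Fin r) :
    rowOp (c • A) i = c • rowOp A i := by
  simp [rowOp, mul_smul, Finset.smul_sum]

@[simp]
theorem rowOp_zero (i : Fin r) : rowOp (0 : Matrix (Fin r) (Fin r) K) i = 0 := by
  simp [rowOp]

theorem rowOp_one (i : Fin r) : rowOp (1 : Matrix (Fin r) (Fin r) K) i = X i := by
  classical
  simp [rowOp, Matrix.one_apply, ite_smul]

theorem coeff_rowOp (A : Matrix (Fin r) (Fin r) K) (i k : Fin r) :
    coeff (Finsupp.single k 1) (rowOp A i) = A i k := by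
  classical
  simp [rowOp, coeff_sum, coeff_X, Finsupp.single_left_inj]

theorem isHomogeneous_rowOp (A : Matrix (Fin r) (Fin r) K) (i : Fin r) :
    (rowOp A i).IsHomogeneous 1 :=
  (mem_homogeneousSubmodule 1 _).mp <|
    Submodule.sum_mem _ fun k _ => Submodule.smul_mem _ _ (isHomogeneous_X K k)

theorem contract_rowOp (A : Matrix (Fin r) (Fin r) K) (i : Fin r) (f : MvPolynomial (Fin r) K) :
    contract (rowOp A i) f = ∑ k, A i k • contract (X k) f := by
  simp only [rowOp, contract_sum_left, contract_smul_left]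

noncomputable def ann (e : ℕ) (f : MvPolynomial (Fin r) K) :
    Submodule K (MvPolynomial (Fin r) K) where
  carrier := {D | D.IsHomogeneous e ∧ contract D f = 0}
  zero_mem' := ⟨isHomogeneous_zero _ _ _, contract_zero_left f⟩
  add_mem' hD hE := ⟨hD.1.add hE.1, by rw [contract_add_left, hD.2, hE.2, add_zero]⟩
  smul_mem' c D hD := ⟨(mem_homogeneousSubmodule e _).mp (Submodule.smul_mem _ c hD.1),
    by rw [contract_smul_left, hD.2, smul_zero]⟩

theorem ann_le_homogeneousSubmodule (e : ℕ) (f : MvPolynomial (Fin r) K) :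
    ann e f ≤ homogeneousSubmodule (Fin r) K e :=
  fun _ hD => hD.1

theorem setFinrank_ann (e : ℕ) (f : MvPolynomial (Fin r) K) :
    Set.finrank K {D : MvPolynomial (Fin r) K | D.IsHomogeneous e ∧ contract D f = 0} =
      finrank K (ann e f) :=
  Submodule.setFinrank_coe (ann e f)

/-- `R₁ · ann_R(f)_e`. -/
noncomputable def linearMulAnn (e : ℕ) (f : MvPolynomial (Fin r) K) :
    Submodule K (MvPolynomial (Fin r) K) :=
  Submodule.span K
    {p | ∃ i, ∃ D : MvPolynomial (Fin r) K, D.IsHomogeneous e ∧ contract D f = 0 ∧ p = X i * D}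

theorem linearMulAnn_pred_le_ann {d : ℕ} (hd : 0 < d) (f : MvPolynomial (Fin r) K) :
    linearMulAnn (d - 1) f ≤ ann d f :=
  Submodule.span_le.mpr <| by
    rintro p ⟨i, D, hD, hDf, rfl⟩
    refine ⟨?_, by rw [contract_mul, hDf, contract_zero_right]⟩
    simpa [Nat.add_sub_cancel' hd] using (isHomogeneous_X K i).mul hD

end CommSemiring

section CommRing

variable [CommRing K]

theorem contract_sub_left (D E f : MvPolynomial (Fin r) K) :
    contract (D - E) f = contract D f - contract E f :=
  contractBilin.map_sub₂ D E f

theorem one_mem_Mf (f : MvPolynomial (Fin r) K) : 1 ∈ Mf f := fun i j => by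
  rw [rowOp_one, rowOp_one, mul_comm, sub_self, contract_zero_left]

theorem mem_Mf_of_contract_X_eq {f g : MvPolynomial (Fin r) K} {A : Matrix (Fin r) (Fin r) K}
    (h : ∀ i, contract (X i) g = contract (rowOp A i) f) : A ∈ Mf f := fun i j => by
  rw [contract_sub_left, contract_mul, contract_mul, ← h i, ← h j, contract_comm, sub_self]

noncomputable def MfSubmodule (f : MvPolynomial (Fin r) K) :
    Submodule K (Matrix (Fin r) (Fin r) K) where
  carrier := Mf f
  zero_mem' i j := by simp
  add_mem' {A B} hA hB i j := by
    rw [rowOp_add, rowOp_add,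
      show X i * (rowOp A j + rowOp B j) - X j * (rowOp A i + rowOp B i) =
        (X i * rowOp A j - X j * rowOp A i) + (X i * rowOp B j - X j * rowOp B i) by ring,
      contract_add_left, hA i j, hB i j, add_zero]
  smul_mem' c A hA i j := by
    rw [rowOp_smul, rowOp_smul, mul_smul_comm, mul_smul_comm, ← smul_sub, contract_smul_left,
      hA i j, smul_zero]

theorem coe_MfSubmodule (f : MvPolynomial (Fin r) K) :
    (MfSubmodule f : Set (Matrix (Fin r) (Fin r) K)) = Mf f :=
  rfl

theorem exists_mem_Mf_iff_contract_X_mem_span {f g : MvPolynomial (Fin r) K} :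
    (∃ A ∈ Mf f, ∀ i, contract (X i) g = contract (rowOp A i) f) ↔
      ∀ i, contract (X i) g ∈ Submodule.span K (Set.range fun k => contract (X k) f) := by
  constructor
  · rintro ⟨A, -, h⟩ i
    rw [h i, contract_rowOp]
    exact Submodule.sum_mem _ fun k _ => Submodule.smul_mem _ _ (Submodule.subset_span ⟨k, rfl⟩)
  · intro h
    choose a ha using fun i => (Submodule.mem_span_range_iff_exists_fun K).mp (h i)
    have hA (i : Fin r) : contract (X i) g = contract (rowOp (Matrix.of a) i) f := by
      rw [contract_rowOp, ← ha i]
      rfl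
    exact ⟨Matrix.of a, mem_Mf_of_contract_X_eq hA, hA⟩

noncomputable def gammaKer (f : MvPolynomial (Fin r) K) :
    Submodule K (Matrix (Fin r) (Fin r) K) where
  carrier := {A | ∀ i, contract (rowOp A i) f = 0}
  zero_mem' i := by simp
  add_mem' {A B} hA hB i := by rw [rowOp_add, contract_add_left, hA i, hB i, add_zero]
  smul_mem' c A hA i := by rw [rowOp_smul, contract_smul_left, hA i, smul_zero]

theorem gammaKer_le_MfSubmodule (f : MvPolynomial (Fin r) K) : gammaKer f ≤ MfSubmodule f :=
  fun _ hA => mem_Mf_of_contract_X_eq (g := 0) fun i => by rw [contract_zero_right, hA i]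

theorem kernelSet_eq (f : MvPolynomial (Fin r) K) :
    {A : Matrix (Fin r) (Fin r) K | A ∈ Mf f ∧ ∀ i, contract (rowOp A i) f = 0} = gammaKer f :=
  Set.ext fun _ => ⟨And.right, fun hA => ⟨gammaKer_le_MfSubmodule f hA, hA⟩⟩

noncomputable def gammaKerEquiv (f : MvPolynomial (Fin r) K) :
    gammaKer f ≃ₗ[K] (Fin r → ann 1 f) :=
  LinearEquiv.ofBijective
    { toFun := fun (A : gammaKer f) i =>
        (⟨rowOp A.1 i, isHomogeneous_rowOp _ i, A.2 i⟩ : ann 1 f)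
      map_add' := fun A B => funext fun i => Subtype.ext (rowOp_add A.1 B.1 i)
      map_smul' := fun c A => funext fun i => Subtype.ext (rowOp_smul c A.1 i) }
    ⟨fun A B hAB => Subtype.ext <| Matrix.ext fun i k => by
      rw [← coeff_rowOp A.1 i k, ← coeff_rowOp B.1 i k]
      exact congrArg (coeff _) (congrArg Subtype.val (congrFun hAB i)),
    fun v => by
      choose a ha using fun i => (v i).2.1.exists_sum_smul_X_eq
      exact ⟨⟨Matrix.of a, fun i => by rw [rowOp, ← (v i).2.2, ← ha i]; rfl⟩,
        funext fun i => Subtype.ext (ha i)⟩⟩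

end CommRing

section Field

variable [Field K]

instance (n : ℕ) : FiniteDimensional K (homogeneousSubmodule (Fin r) K n) :=
  Module.Finite.iff_fg.mpr (homogeneousSubmodule_fg (Fin r) K n)

instance (e : ℕ) (f : MvPolynomial (Fin r) K) : FiniteDimensional K (ann e f) :=
  Submodule.finiteDimensional_of_le (ann_le_homogeneousSubmodule e f)

theorem finrank_gammaKer (f : MvPolynomial (Fin r) K) :
    finrank K (gammaKer f) = r * finrank K (ann 1 f) := by
  simp [(gammaKerEquiv f).finrank_eq, Module.finrank_pi_fintype]

theorem finrank_kernelSet (f : MvPolynomial (Fin r) K) :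
    Set.finrank K {A : Matrix (Fin r) (Fin r) K | A ∈ Mf f ∧ ∀ i, contract (rowOp A i) f = 0} =
      r * Set.finrank K {D : MvPolynomial (Fin r) K | D.IsHomogeneous 1 ∧ contract D f = 0} := by
  rw [kernelSet_eq, Submodule.setFinrank_coe, finrank_gammaKer, setFinrank_ann]

noncomputable def apolarForm (n : ℕ) : LinearMap.BilinForm K (homogeneousSubmodule (Fin r) K n) :=
  (contractBilin.compl₁₂ (homogeneousSubmodule (Fin r) K n).subtype
    (homogeneousSubmodule (Fin r) K n).subtype).compr₂ (lcoeff K 0)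

theorem apolarForm_apply (n : ℕ) (D g : homogeneousSubmodule (Fin r) K n) :
    apolarForm n D g = coeff 0 (contract (D : MvPolynomial (Fin r) K) g) :=
  rfl

noncomputable def apolarOrthogonal (n : ℕ) (W : Submodule K (MvPolynomial (Fin r) K)) :
    Submodule K (MvPolynomial (Fin r) K) :=
  homogeneousSubmodule (Fin r) K n ⊓ ⨅ D ∈ W, LinearMap.ker (contractBilin D)

theorem mem_apolarOrthogonal {n : ℕ} {W : Submodule K (MvPolynomial (Fin r) K)}
    {g : MvPolynomial (Fin r) K} :
    g ∈ apolarOrthogonal n W ↔ g.IsHomogeneous n ∧ ∀ D ∈ W, contract D g = 0 := by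
  simp [apolarOrthogonal]

instance (n : ℕ) (W : Submodule K (MvPolynomial (Fin r) K)) :
    FiniteDimensional K (apolarOrthogonal n W) :=
  Submodule.finiteDimensional_of_le inf_le_left

theorem apolarOrthogonal_eq_map_orthogonal {n : ℕ} {W : Submodule K (MvPolynomial (Fin r) K)}
    (hW : W ≤ homogeneousSubmodule (Fin r) K n) :
    apolarOrthogonal n W =
      ((apolarForm n).orthogonal (W.comap (homogeneousSubmodule (Fin r) K n).subtype)).map
        (homogeneousSubmodule (Fin r) K n).subtype := by
  ext g
  simp only [mem_apolarOrthogonal, Submodule.mem_map, LinearMap.BilinForm.mem_orthogonal_iff,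
    Submodule.mem_comap, Submodule.subtype_apply, apolarForm_apply]
  constructor
  · rintro ⟨hg, hgW⟩
    exact ⟨⟨g, hg⟩, fun D hD => by rw [hgW D hD, coeff_zero], rfl⟩
  · rintro ⟨g, hg, rfl⟩
    exact ⟨g.2, fun D hD => (contract_eq_zero_iff_coeff_zero (hW hD) g.2).mpr (hg ⟨D, hW hD⟩ hD)⟩

variable [CharZero K]

theorem eq_zero_of_forall_contract_eq_zero {n : ℕ} {g : MvPolynomial (Fin r) K}
    (hg : g.IsHomogeneous n)
    (h : ∀ D : MvPolynomial (Fin r) K, D.IsHomogeneous n → contract D g = 0) : g = 0 := by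
  ext δ
  rw [coeff_zero]
  by_contra hδ
  have hδn : δ.degree = n := by
    rw [Finsupp.degree_eq_weight_one]
    exact hg hδ
  -- `∂^δ g` has constant term `δ! · g_δ`
  have hD := congrArg (coeff 0) (h (monomial δ 1) (isHomogeneous_monomial 1 hδn))
  rw [contract_monomial, one_smul, coeff_derivMulti, zero_add, coeff_zero, smul_eq_zero] at hD
  refine hD.elim (Finset.prod_ne_zero_iff.mpr fun i _ => ?_) hδ
  simp only [Finsupp.coe_zero, Pi.zero_apply, zero_add, Nat.descFactorial_self]
  exact (Nat.factorial_pos _).ne'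

theorem apolarForm_nondegenerate (n : ℕ) : (apolarForm (K := K) (r := r) n).Nondegenerate := by
  refine ⟨fun D hD => Subtype.ext (eq_zero_of_forall_contract_eq_zero D.2 fun E hE => ?_),
    fun g hg => Subtype.ext (eq_zero_of_forall_contract_eq_zero g.2 fun E hE => ?_)⟩
  · rw [contract_eq_zero_comm hE D.2, contract_eq_zero_iff_coeff_zero D.2 hE]
    exact hD ⟨E, hE⟩
  · rw [contract_eq_zero_iff_coeff_zero hE g.2]
    exact hg ⟨E, hE⟩

theorem finrank_apolarOrthogonal {n : ℕ} {W : Submodule K (MvPolynomial (Fin r) K)}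
    (hW : W ≤ homogeneousSubmodule (Fin r) K n) :
    finrank K (apolarOrthogonal n W) =
      finrank K (homogeneousSubmodule (Fin r) K n) - finrank K W := by
  rw [apolarOrthogonal_eq_map_orthogonal hW, Submodule.finrank_map_subtype_eq,
    LinearMap.BilinForm.finrank_orthogonal (apolarForm_nondegenerate n),
    (Submodule.comapSubtypeEquivOfLe hW).finrank_eq]

theorem apolarOrthogonal_apolarOrthogonal {n : ℕ} {W : Submodule K (MvPolynomial (Fin r) K)}
    (hW : W ≤ homogeneousSubmodule (Fin r) K n) :
    apolarOrthogonal n (apolarOrthogonal n W) = W := by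
  have hle : W ≤ apolarOrthogonal n (apolarOrthogonal n W) := fun w hw =>
    mem_apolarOrthogonal.mpr ⟨hW hw, fun D hD =>
      (contract_eq_zero_comm (mem_apolarOrthogonal.mp hD).1 (hW hw)).mpr
        ((mem_apolarOrthogonal.mp hD).2 w hw)⟩
  have hWV := Submodule.finrank_mono hW
  refine (Submodule.eq_of_le_of_finrank_eq hle ?_).symm
  rw [finrank_apolarOrthogonal fun g hg => (mem_apolarOrthogonal.mp hg).1,
    finrank_apolarOrthogonal hW]
  omega

theorem eq_of_forall_contract_X_eq {n : ℕ} (hn : n ≠ 0) {g h : MvPolynomial (Fin r) K}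
    (hg : g.IsHomogeneous n) (hh : h.IsHomogeneous n)
    (hgh : ∀ i, contract (X i) g = contract (X i) h) : g = h :=
  hg.eq_of_forall_pderiv_eq hn hh fun i => by simpa only [contract_X] using hgh i

variable {d : ℕ} {f : MvPolynomial (Fin r) K}

theorem ann_eq_apolarOrthogonal_span_singleton (hf : f.IsHomogeneous d) :
    ann d f = apolarOrthogonal d (K ∙ f) := by
  ext D
  simp only [mem_apolarOrthogonal, Submodule.mem_span_singleton, forall_exists_index,
    forall_apply_eq_imp_iff, contract_smul_left, smul_eq_zero]
  refine and_congr_right fun hD => ?_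
  rw [contract_eq_zero_comm hD hf]
  exact ⟨fun h _ => Or.inr h, fun h => (h 1).resolve_left one_ne_zero⟩

theorem finrank_ann_of_ne_zero (hf : f.IsHomogeneous d) (hf0 : f ≠ 0) :
    finrank K (ann d f) = finrank K (homogeneousSubmodule (Fin r) K d) - 1 := by
  rw [ann_eq_apolarOrthogonal_span_singleton hf,
    finrank_apolarOrthogonal ((Submodule.span_singleton_le_iff_mem _ _).mpr hf),
    finrank_span_singleton hf0]

/-- `D(f)` is linear and `∂ₖ (D f) = D (∂ₖ f)`, so `D f = 0` iff `D` kills every `∂ₖ f`. -/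
theorem ann_pred_eq_apolarOrthogonal (hd : 0 < d) (hf : f.IsHomogeneous d) :
    ann (d - 1) f =
      apolarOrthogonal (d - 1) (Submodule.span K (Set.range fun k => contract (X k) f)) := by
  ext D
  rw [mem_apolarOrthogonal, forall_mem_span_contract_eq_zero_iff, Set.forall_mem_range]
  refine and_congr_right fun hD => ?_
  have hDf : (contract D f).IsHomogeneous 1 := by
    simpa [Nat.sub_sub_self hd] using isHomogeneous_contract hD hf
  simp only [← contract_eq_zero_comm hD (isHomogeneous_contract (isHomogeneous_X K _) hf),
    contract_comm D]
  exact ⟨fun h k => by rw [h, contract_zero_right], fun h =>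
    eq_of_forall_contract_X_eq one_ne_zero hDf (isHomogeneous_zero _ _ _) fun k => by simp [h k]⟩

theorem apolarOrthogonal_ann_pred (hd : 0 < d) (hf : f.IsHomogeneous d) :
    apolarOrthogonal (d - 1) (ann (d - 1) f) =
      Submodule.span K (Set.range fun k => contract (X k) f) := by
  rw [ann_pred_eq_apolarOrthogonal hd hf, apolarOrthogonal_apolarOrthogonal (span_contract_X_le hf)]

theorem imageSet_eq_apolarOrthogonal (hd : 0 < d) (hf : f.IsHomogeneous d) :
    {g | g.IsHomogeneous d ∧ ∃ A ∈ Mf f, ∀ i, contract (X i) g = contract (rowOp A i) f} =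
      (apolarOrthogonal d (linearMulAnn (d - 1) f) : Set (MvPolynomial (Fin r) K)) := by
  ext g
  rw [Set.mem_ofPred_eq, SetLike.mem_coe, mem_apolarOrthogonal, linearMulAnn,
    forall_mem_span_contract_eq_zero_iff]
  refine and_congr_right fun hg => ?_
  rw [exists_mem_Mf_iff_contract_X_mem_span, ← apolarOrthogonal_ann_pred hd hf]
  simp only [mem_apolarOrthogonal, isHomogeneous_contract (isHomogeneous_X K _) hg, true_and,
    Set.mem_ofPred_eq, forall_exists_index, and_imp]
  refine ⟨fun h p i D hD hDf hp => ?_, fun h i D hD => ?_⟩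
  · rw [hp, mul_comm, contract_mul]
    exact h i D ⟨hD, hDf⟩
  · rw [← contract_mul, mul_comm]
    exact h _ i D hD.1 hD.2 rfl

theorem finrank_imageSet (hd : 0 < d) (hf : f.IsHomogeneous d) (hf0 : f ≠ 0) :
    Set.finrank K
        {g | g.IsHomogeneous d ∧ ∃ A ∈ Mf f, ∀ i, contract (X i) g = contract (rowOp A i) f} =
      1 + (Set.finrank K {D : MvPolynomial (Fin r) K | D.IsHomogeneous d ∧ contract D f = 0} -
        Set.finrank K {p : MvPolynomial (Fin r) K | ∃ i, ∃ D : MvPolynomial (Fin r) K,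
          D.IsHomogeneous (d - 1) ∧ contract D f = 0 ∧ p = X i * D}) := by
  have hL := linearMulAnn_pred_le_ann hd f
  have hLann := Submodule.finrank_mono hL
  have hV : 1 ≤ finrank K (homogeneousSubmodule (Fin r) K d) :=
    (finrank_span_singleton hf0).symm.le.trans
      (Submodule.finrank_mono ((Submodule.span_singleton_le_iff_mem _ _).mpr hf))
  rw [finrank_ann_of_ne_zero hf hf0] at hLann
  rw [imageSet_eq_apolarOrthogonal hd hf, Submodule.setFinrank_coe,
    finrank_apolarOrthogonal (hL.trans (ann_le_homogeneousSubmodule d f)), setFinrank_ann,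
    finrank_ann_of_ne_zero hf hf0]
  change _ = 1 + (_ - finrank K (linearMulAnn (d - 1) f))
  omega

/-- The unique `γ_f(A)` is `d⁻¹ Σᵢ xᵢ (A∂)ᵢ f`: the condition `A ∈ M_f` says exactly that the
1-form `Σᵢ (A∂)ᵢ f dxᵢ` is closed. -/
theorem exists_contract_X_eq_contract_rowOp (hd : 0 < d) (hf : f.IsHomogeneous d)
    {A : Matrix (Fin r) (Fin r) K} (hA : A ∈ Mf f) :
    ∃ g : MvPolynomial (Fin r) K, g.IsHomogeneous d ∧
      ∀ i, contract (X i) g = contract (rowOp A i) f := by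
  set h := fun i => contract (rowOp A i) f
  have hh (i : Fin r) : (h i).IsHomogeneous (d - 1) :=
    isHomogeneous_contract (isHomogeneous_rowOp A i) hf
  have closed (i j : Fin r) : pderiv i (h j) = pderiv j (h i) := by
    simpa only [contract_sub_left, contract_mul, contract_X, sub_eq_zero] using hA i j
  refine ⟨(d : K)⁻¹ • ∑ i, X i * h i, ?_, fun j => ?_⟩
  · have hsum := IsHomogeneous.sum Finset.univ _ _ fun i _ => (isHomogeneous_X K i).mul (hh i)
    rw [Nat.add_sub_cancel' hd] at hsum
    exact (mem_homogeneousSubmodule d _).mp (Submodule.smul_mem _ _ hsum)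
  · rw [contract_smul_right, contract_X, pderiv_sum_X_mul hh closed j, Nat.sub_add_cancel hd,
      ← Nat.cast_smul_eq_nsmul K, smul_smul, inv_mul_cancel₀ (Nat.cast_ne_zero.mpr hd.ne'),
      one_smul]

theorem gammaf_eq (hd : 0 < d) {A : Matrix (Fin r) (Fin r) K} {g : MvPolynomial (Fin r) K}
    (hg : g.IsHomogeneous d) (h : ∀ i, contract (X i) g = contract (rowOp A i) f) :
    gammaf d f A = g := by
  have hex : ∃ g : MvPolynomial (Fin r) K, g.IsHomogeneous d ∧
      ∀ i, contract (X i) g = contract (rowOp A i) f := ⟨g, hg, h⟩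
  rw [gammaf, dif_pos hex]
  exact eq_of_forall_contract_X_eq hd.ne' hex.choose_spec.1 hg fun i => by
    rw [hex.choose_spec.2 i, h i]

theorem gammaf_spec (hd : 0 < d) (hf : f.IsHomogeneous d) {A : Matrix (Fin r) (Fin r) K}
    (hA : A ∈ Mf f) :
    (gammaf d f A).IsHomogeneous d ∧
      ∀ i, contract (X i) (gammaf d f A) = contract (rowOp A i) f := by
  obtain ⟨g, hg, h⟩ := exists_contract_X_eq_contract_rowOp hd hf hA
  rw [gammaf_eq hd hg h]
  exact ⟨hg, h⟩

noncomputable def gammaLinearMap (hd : 0 < d) (hf : f.IsHomogeneous d) :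
    MfSubmodule f →ₗ[K] MvPolynomial (Fin r) K where
  toFun A := gammaf d f A
  map_add' A B := by
    obtain ⟨hA, hA'⟩ := gammaf_spec hd hf A.2
    obtain ⟨hB, hB'⟩ := gammaf_spec hd hf B.2
    exact gammaf_eq hd (hA.add hB) fun i => by
      rw [contract_add_right, hA' i, hB' i, Submodule.coe_add, rowOp_add, contract_add_left]
  map_smul' c A := by
    obtain ⟨hA, hA'⟩ := gammaf_spec hd hf A.2
    refine gammaf_eq hd ((mem_homogeneousSubmodule d _).mp (Submodule.smul_mem _ c hA))
      fun i => ?_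
    rw [contract_smul_right, hA' i, Submodule.coe_smul, rowOp_smul, contract_smul_left,
      RingHom.id_apply]

theorem gammaLinearMap_apply (hd : 0 < d) (hf : f.IsHomogeneous d) (A : MfSubmodule f) :
    gammaLinearMap hd hf A = gammaf d f A :=
  rfl

theorem ker_gammaLinearMap (hd : 0 < d) (hf : f.IsHomogeneous d) :
    LinearMap.ker (gammaLinearMap hd hf) = (gammaKer f).comap (MfSubmodule f).subtype := by
  ext A
  rw [LinearMap.mem_ker, gammaLinearMap_apply, Submodule.mem_comap, Submodule.subtype_apply]
  refine ⟨fun h0 i => ?_, fun h0 => gammaf_eq hd (isHomogeneous_zero _ _ _) fun i => ?_⟩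
  · rw [← (gammaf_spec hd hf A.2).2 i, h0, contract_zero_right]
  · rw [contract_zero_right, h0 i]

theorem range_gammaLinearMap (hd : 0 < d) (hf : f.IsHomogeneous d) :
    (LinearMap.range (gammaLinearMap hd hf) : Set (MvPolynomial (Fin r) K)) =
      {g | g.IsHomogeneous d ∧ ∃ A ∈ Mf f, ∀ i, contract (X i) g = contract (rowOp A i) f} := by
  ext g
  constructor
  · rintro ⟨A, rfl⟩
    exact ⟨(gammaf_spec hd hf A.2).1, A, A.2, (gammaf_spec hd hf A.2).2⟩
  · rintro ⟨hg, A, hA, h⟩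
    exact ⟨⟨A, hA⟩, gammaf_eq hd hg h⟩

theorem finrank_Mf_eq_add (hd : 0 < d) (hf : f.IsHomogeneous d) :
    Set.finrank K (Mf f) =
      Set.finrank K
        {g | g.IsHomogeneous d ∧ ∃ A ∈ Mf f, ∀ i, contract (X i) g = contract (rowOp A i) f} +
      Set.finrank K
        {A : Matrix (Fin r) (Fin r) K | A ∈ Mf f ∧ ∀ i, contract (rowOp A i) f = 0} := by
  rw [← range_gammaLinearMap hd hf, kernelSet_eq, ← coe_MfSubmodule, Submodule.setFinrank_coe,
    Submodule.setFinrank_coe, Submodule.setFinrank_coe,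
    ← (Submodule.comapSubtypeEquivOfLe (gammaKer_le_MfSubmodule f)).finrank_eq,
    ← ker_gammaLinearMap hd hf, LinearMap.finrank_range_add_finrank_ker]

end Field

end

/-- Lemma 2.12. For `d > 0` and `0 ≠ f ∈ ℛ_d`:
(a) `M_f` is a `K`-linear subspace of `Mat_r(K)` containing the identity;
(b) `γ_f` is `K`-linear on `M_f`;
(c) `dim_K ker γ_f = r·β₁₁(f)` and `dim_K im γ_f = 1 + β₁d(f)`;
(d) `dim_K M_f = 1 + β₁d(f) + r·β₁₁(f)`.
Here `β₁₁(f) = dim_K ann_R(f)_1` and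
`β₁d(f) = dim_K ann_R(f)_d − dim_K (R_1·ann_R(f)_{d−1})`. -/
theorem Mf_dimension {K : Type*} [Field K] [CharZero K] {r d : ℕ} (hd : 0 < d)
    (f : MvPolynomial (Fin r) K) (hf : f.IsHomogeneous d) (hf0 : f ≠ 0) :
    (1 ∈ Mf f ∧ ∀ a b : K, ∀ A ∈ Mf f, ∀ B ∈ Mf f, a • A + b • B ∈ Mf f) ∧
    (∀ a b : K, ∀ A ∈ Mf f, ∀ B ∈ Mf f,
      gammaf d f (a • A + b • B) = a • gammaf d f A + b • gammaf d f B) ∧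
    (Set.finrank K {A : Matrix (Fin r) (Fin r) K |
        A ∈ Mf f ∧ ∀ i, contract (rowOp A i) f = 0} =
      r * Set.finrank K {D : MvPolynomial (Fin r) K |
        D.IsHomogeneous 1 ∧ contract D f = 0}) ∧
    (Set.finrank K {g : MvPolynomial (Fin r) K | g.IsHomogeneous d ∧
        ∃ A ∈ Mf f, ∀ i, contract (X i) g = contract (rowOp A i) f} =
      1 + (Set.finrank K {D : MvPolynomial (Fin r) K |
          D.IsHomogeneous d ∧ contract D f = 0} -
        Set.finrank K {p : MvPolynomial (Fin r) K | ∃ i, ∃ D : MvPolynomial (Fin r) K,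
          D.IsHomogeneous (d - 1) ∧ contract D f = 0 ∧ p = X i * D})) ∧
    (Set.finrank K (Mf f) =
      1 + (Set.finrank K {D : MvPolynomial (Fin r) K |
          D.IsHomogeneous d ∧ contract D f = 0} -
        Set.finrank K {p : MvPolynomial (Fin r) K | ∃ i, ∃ D : MvPolynomial (Fin r) K,
          D.IsHomogeneous (d - 1) ∧ contract D f = 0 ∧ p = X i * D}) +
      r * Set.finrank K {D : MvPolynomial (Fin r) K |
        D.IsHomogeneous 1 ∧ contract D f = 0}) := by
  refine ⟨⟨one_mem_Mf f, fun a b A hA B hB => (MfSubmodule f).add_mem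
    ((MfSubmodule f).smul_mem a hA) ((MfSubmodule f).smul_mem b hB)⟩,
    fun a b A hA B hB => ?_, finrank_kernelSet f, finrank_imageSet hd hf hf0, ?_⟩
  · simpa [gammaLinearMap_apply] using
      (gammaLinearMap hd hf).map_add (a • ⟨A, hA⟩) (b • ⟨B, hB⟩)
  · rw [finrank_Mf_eq_add hd hf, finrank_imageSet hd hf hf0, finrank_kernelSet f]

end Kleppe
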